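/- Gödel's theorem on double negation in predicate logic: let ⊢_* be intuitionistic first-order predicate logic plus additional axioms contained in classical predicate logic ⊢_c^Q. Then (Γ ⊢_c^Q φ ⟺ Γ ⊢_*^Q ¬¬φ for all Γ, φ) if and only if ⊢_*^Q satisfies the double negation shift ∀x¬¬φ ⊢ ¬¬∀xφ for all φ. -/

import Mathlib

/-- A single-conclusion entailment relation on `S`. -/
structure IsEntailment {S : Type*} [DecidableEq S] (E : Finset S → S → Prop) : Prop where
  refl : ∀ (U : Finset S) (a : S), a ∈ U → E U a
  mono : ∀ (U U' : Finset S) (a : S), E U a → E (U ∪ U') a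
  cut : ∀ (V V' : Finset S) (a b : S), E V b → E (insert b V') a → E (V ∪ V') a

/-- A nucleus over an entailment relation. -/
structure IsNucleus {S : Type*} [DecidableEq S] (E : Finset S → S → Prop) (j : S → S) : Prop where
  lj : ∀ (U : Finset S) (a b : S), E (insert a U) (j b) → E (insert (j a) U) (j b)
  rj : ∀ (U : Finset S) (b : S), E U b → E U (j b)

/-- First-order formulas over a purely relational language (terms are
variables, indexed by naturals). -/
inductive FOF where
  | pred : ℕ → List ℕ → FOF
  | top : FOF
  | bot : FOF
  | and : FOF → FOF → FOF
  | or : FOF → FOF → FOF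
  | imp : FOF → FOF → FOF
  | neg : FOF → FOF
  | all : ℕ → FOF → FOF
  | ex : ℕ → FOF → FOF
deriving DecidableEq

/-- Free variables of a formula. -/
def FOF.free : FOF → Finset ℕ
  | pred _ l => l.toFinset
  | top => ∅
  | bot => ∅
  | and φ ψ => φ.free ∪ ψ.free
  | or φ ψ => φ.free ∪ ψ.free
  | imp φ ψ => φ.free ∪ ψ.free
  | neg φ => φ.free
  | all x φ => φ.free.erase x
  | ex x φ => φ.free.erase x

/-- Substitution `φ[t/x]` of the variable (term) `t` for the variable `x`. -/
def FOF.subst (x t : ℕ) : FOF → FOF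
  | pred n l => pred n (l.map fun v => if v = x then t else v)
  | top => top
  | bot => bot
  | and φ ψ => and (φ.subst x t) (ψ.subst x t)
  | or φ ψ => or (φ.subst x t) (ψ.subst x t)
  | imp φ ψ => imp (φ.subst x t) (ψ.subst x t)
  | neg φ => neg (φ.subst x t)
  | all y φ => if y = x then all y φ else all y (φ.subst x t)
  | ex y φ => if y = x then ex y φ else ex y (φ.subst x t)

/-- `t` is free for `x` in `φ`: substituting `t` for `x` captures no variable. -/
def FOF.freeFor (t x : ℕ) : FOF → Prop
  | pred _ _ => True
  | top => True
  | bot => True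
  | and φ ψ => φ.freeFor t x ∧ ψ.freeFor t x
  | or φ ψ => φ.freeFor t x ∧ ψ.freeFor t x
  | imp φ ψ => φ.freeFor t x ∧ ψ.freeFor t x
  | neg φ => φ.freeFor t x
  | all y φ => x = y ∨ (t ≠ y ∧ φ.freeFor t x)
  | ex y φ => x = y ∨ (t ≠ y ∧ φ.freeFor t x)

/-- Generators of intuitionistic first-order predicate logic `⊢_i^Q`. -/
structure IntQGen (E : Finset FOF → FOF → Prop) : Prop where
  ent : IsEntailment E
  rimp : ∀ (Γ : Finset FOF) (φ ψ : FOF), E (insert φ Γ) ψ → E Γ (φ.imp ψ)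
  andI : ∀ φ ψ : FOF, E {φ, ψ} (φ.and ψ)
  andE1 : ∀ φ ψ : FOF, E {φ.and ψ} φ
  andE2 : ∀ φ ψ : FOF, E {φ.and ψ} ψ
  orI1 : ∀ φ ψ : FOF, E {φ} (φ.or ψ)
  orI2 : ∀ φ ψ : FOF, E {ψ} (φ.or ψ)
  orE : ∀ φ ψ δ : FOF, E {φ.or ψ, φ.imp δ, ψ.imp δ} δ
  mp : ∀ φ ψ : FOF, E {φ, φ.imp ψ} ψ
  topI : E ∅ FOF.top
  pc1 : ∀ φ : FOF, E {φ.imp .bot} φ.neg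
  pc2 : ∀ φ : FOF, E {φ.neg} (φ.imp .bot)
  efq : ∀ φ : FOF, E {FOF.bot} φ
  lall : ∀ (x t : ℕ) (φ : FOF), φ.freeFor t x → E {FOF.all x φ} (φ.subst x t)
  rex : ∀ (x t : ℕ) (φ : FOF), φ.freeFor t x → E {φ.subst x t} (FOF.ex x φ)
  rall : ∀ (Γ : Finset FOF) (x y : ℕ) (φ : FOF), φ.freeFor y x →
    (∀ γ ∈ Γ, y ∉ γ.free) → y ∉ (FOF.all x φ).free →
    E Γ (φ.subst x y) → E Γ (FOF.all x φ)
  lex : ∀ (Γ : Finset FOF) (δ : FOF) (x y : ℕ) (φ : FOF), φ.freeFor y x →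
    (∀ γ ∈ Γ, y ∉ γ.free) → y ∉ δ.free → y ∉ (FOF.ex x φ).free →
    E (insert (φ.subst x y) Γ) δ → E (insert (FOF.ex x φ) Γ) δ

/-- Generators of classical predicate logic: `⊢_i^Q` plus reductio ad absurdum. -/
structure ClQGen (E : Finset FOF → FOF → Prop) extends IntQGen E : Prop where
  raa : ∀ φ : FOF, E {φ.neg.neg} φ

/-- Classical first-order predicate logic `⊢_c^Q`. -/
def ClQD (Γ : Finset FOF) (φ : FOF) : Prop :=
  ∀ E : Finset FOF → FOF → Prop, ClQGen E → E Γ φ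

/-- `⊢_i^Q` plus the additional axioms `Ax`. -/
def IntQExtD (Ax : Set (Finset FOF × FOF)) (Γ : Finset FOF) (φ : FOF) : Prop :=
  ∀ E : Finset FOF → FOF → Prop, IntQGen E → (∀ p ∈ Ax, E p.1 p.2) → E Γ φ

/-!
Let `⊢_*` satisfy the double negation shift. Then `Γ ⊢_* ¬¬φ`, read as a relation between `Γ`
and `φ`, satisfies every generating rule of classical logic: `¬¬` is a nucleus on `⊢_*`, so the
structural rules and all axioms survive; the quantifier rule `∀R` survives precisely thanks to
the shift; and `¬¬φ ⊢ φ` becomes `¬¬¬¬φ ⊢_* ¬¬φ`. Since `⊢_c` is the least such relation,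
`Γ ⊢_c φ` gives `Γ ⊢_* ¬¬φ`; the converse holds because the axioms of `⊢_*` are classical.
Conversely, `∀x¬¬φ ⊢_c ∀xφ`, so the equivalence yields the shift.
-/

namespace IsEntailment

variable {S : Type*} [DecidableEq S] {E : Finset S → S → Prop} {U V : Finset S} {a b c : S}

theorem weaken (hE : IsEntailment E) (h : E U a) (hUV : U ⊆ V) : E V a := by
  simpa [Finset.union_eq_right.mpr hUV] using hE.mono U V a h

theorem cut_self (hE : IsEntailment E) (hb : E U b) (h : E (insert b U) a) : E U a := by
  simpa using hE.cut U U a b hb h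

theorem cut_singleton (hE : IsEntailment E) (hb : E U b) (h : E {b} a) : E U a :=
  hE.cut_self hb (hE.weaken h (by simp))

theorem cut_pair (hE : IsEntailment E) (ha : E U a) (hb : E U b) (h : E {a, b} c) : E U c :=
  hE.cut_self ha <| hE.cut_self (hE.weaken hb (Finset.subset_insert _ _)) <|
    hE.weaken h (by simp [Finset.insert_subset_iff])

theorem comp_nucleus {j : S → S} (hE : IsEntailment E) (hj : IsNucleus E j) :
    IsEntailment fun U a => E U (j a) where
  refl U a ha := hj.rj U a (hE.refl U a ha)
  mono U U' a h := hE.mono U U' (j a) h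
  cut V V' a b hb h := hE.cut V V' (j a) (j b) hb (hj.lj V' b a h)

end IsEntailment

namespace IntQGen

variable {E : Finset FOF → FOF → Prop} {Γ : Finset FOF} {φ ψ : FOF}

theorem mp_of (hE : IntQGen E) (hφ : E Γ φ) (himp : E Γ (φ.imp ψ)) : E Γ ψ :=
  hE.ent.cut_pair hφ himp (hE.mp φ ψ)

theorem bot_of_neg (hE : IntQGen E) (hn : E Γ φ.neg) (h : E Γ φ) : E Γ .bot :=
  hE.mp_of h (hE.ent.cut_singleton hn (hE.pc2 φ))

theorem neg_of (hE : IntQGen E) (h : E (insert φ Γ) .bot) : E Γ φ.neg :=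
  hE.ent.cut_singleton (hE.rimp Γ φ .bot h) (hE.pc1 φ)

theorem of_bot (hE : IntQGen E) (h : E Γ .bot) : E Γ φ :=
  hE.ent.cut_singleton h (hE.efq φ)

theorem negNeg_of (hE : IntQGen E) (h : E Γ φ) : E Γ φ.neg.neg :=
  hE.neg_of <|
    hE.bot_of_neg (hE.ent.refl _ _ (by simp)) (hE.ent.weaken h (Finset.subset_insert _ _))

theorem isNucleus_negNeg (hE : IntQGen E) : IsNucleus E fun φ => φ.neg.neg where
  rj _ _ := hE.negNeg_of
  lj U a b h := by
    -- from `U, a ⊢ ¬¬b` get `U, ¬b ⊢ ¬a`, which refutes `¬¬a`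
    have hna : E (insert b.neg U) a.neg :=
      hE.neg_of <| hE.bot_of_neg (hE.ent.weaken h (by grind)) (hE.ent.refl _ _ (by simp))
    refine hE.neg_of <| hE.bot_of_neg (φ := a.neg) (hE.ent.refl _ _ (by simp)) ?_
    exact hE.ent.weaken hna (by grind)

theorem negNeg_imp (hE : IntQGen E) (h : E (insert φ Γ) ψ.neg.neg) :
    E Γ (φ.imp ψ).neg.neg := by
  refine hE.neg_of ?_
  set Δ := insert (φ.imp ψ).neg Γ
  -- `¬(φ → ψ)` yields both `¬ψ` and `¬¬φ`, while `¬ψ` together with `h` yields `¬φ`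
  have hnψ : E Δ ψ.neg :=
    hE.neg_of <| hE.bot_of_neg (φ := φ.imp ψ) (hE.ent.refl _ _ (by simp [Δ]))
      (hE.rimp _ _ _ (hE.ent.refl _ _ (by simp)))
  have hnnφ : E Δ φ.neg.neg :=
    hE.neg_of <| hE.bot_of_neg (φ := φ.imp ψ) (hE.ent.refl _ _ (by simp [Δ])) <|
      hE.rimp _ _ _ <| hE.of_bot <|
        hE.bot_of_neg (φ := φ) (hE.ent.refl _ _ (by simp)) (hE.ent.refl _ _ (by simp))
  have hnφ : E Δ φ.neg :=
    hE.neg_of <| hE.bot_of_neg (φ := ψ.neg) (hE.ent.weaken h (by grind))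
      (hE.ent.weaken hnψ (Finset.subset_insert _ _))
  exact hE.bot_of_neg hnnφ hnφ

theorem clQGen_negNeg (hE : IntQGen E)
    (hdns : ∀ (x : ℕ) (φ : FOF), E {FOF.all x φ.neg.neg} (FOF.all x φ).neg.neg) :
    ClQGen fun Γ φ => E Γ φ.neg.neg where
  ent := hE.ent.comp_nucleus hE.isNucleus_negNeg
  rimp _ _ _ := hE.negNeg_imp
  andI φ ψ := hE.negNeg_of (hE.andI φ ψ)
  andE1 φ ψ := hE.negNeg_of (hE.andE1 φ ψ)
  andE2 φ ψ := hE.negNeg_of (hE.andE2 φ ψ)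
  orI1 φ ψ := hE.negNeg_of (hE.orI1 φ ψ)
  orI2 φ ψ := hE.negNeg_of (hE.orI2 φ ψ)
  orE φ ψ δ := hE.negNeg_of (hE.orE φ ψ δ)
  mp φ ψ := hE.negNeg_of (hE.mp φ ψ)
  topI := hE.negNeg_of hE.topI
  pc1 φ := hE.negNeg_of (hE.pc1 φ)
  pc2 φ := hE.negNeg_of (hE.pc2 φ)
  efq φ := hE.negNeg_of (hE.efq φ)
  lall x t φ hf := hE.negNeg_of (hE.lall x t φ hf)
  rex x t φ hf := hE.negNeg_of (hE.rex x t φ hf)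
  rall Γ x y φ hf hΓ hy h :=
    hE.ent.cut_singleton (hE.rall Γ x y φ.neg.neg hf hΓ hy h) (hdns x φ)
  lex Γ δ x y φ hf hΓ hδ hy h := hE.lex Γ δ.neg.neg x y φ hf hΓ hδ hy h
  raa _ := hE.ent.refl _ _ (Finset.mem_singleton_self _)

end IntQGen

theorem ClQGen.of_negNeg {E : Finset FOF → FOF → Prop} (hE : ClQGen E) {Γ : Finset FOF}
    {φ : FOF} (h : E Γ φ.neg.neg) : E Γ φ :=
  hE.ent.cut_singleton h (hE.raa φ)

theorem intQGen_intQExtD (Ax : Set (Finset FOF × FOF)) : IntQGen (IntQExtD Ax) where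
  ent :=
    { refl := fun U a h _ hE _ => hE.ent.refl U a h
      mono := fun U U' a h E hE hax => hE.ent.mono U U' a (h E hE hax)
      cut := fun V V' a b h1 h2 E hE hax => hE.ent.cut V V' a b (h1 E hE hax) (h2 E hE hax) }
  rimp Γ φ ψ h E hE hax := hE.rimp Γ φ ψ (h E hE hax)
  andI φ ψ _ hE _ := hE.andI φ ψ
  andE1 φ ψ _ hE _ := hE.andE1 φ ψ
  andE2 φ ψ _ hE _ := hE.andE2 φ ψ
  orI1 φ ψ _ hE _ := hE.orI1 φ ψ
  orI2 φ ψ _ hE _ := hE.orI2 φ ψ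
  orE φ ψ δ _ hE _ := hE.orE φ ψ δ
  mp φ ψ _ hE _ := hE.mp φ ψ
  topI _ hE _ := hE.topI
  pc1 φ _ hE _ := hE.pc1 φ
  pc2 φ _ hE _ := hE.pc2 φ
  efq φ _ hE _ := hE.efq φ
  lall x t φ hf _ hE _ := hE.lall x t φ hf
  rex x t φ hf _ hE _ := hE.rex x t φ hf
  rall Γ x y φ hf h1 h2 h E hE hax := hE.rall Γ x y φ hf h1 h2 (h E hE hax)
  lex Γ δ x y φ hf h1 h2 h3 h E hE hax := hE.lex Γ δ x y φ hf h1 h2 h3 (h E hE hax)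

namespace FOF

def boundVars : FOF → Finset ℕ
  | pred _ _ => ∅
  | top => ∅
  | bot => ∅
  | and φ ψ => φ.boundVars ∪ ψ.boundVars
  | or φ ψ => φ.boundVars ∪ ψ.boundVars
  | imp φ ψ => φ.boundVars ∪ ψ.boundVars
  | neg φ => φ.boundVars
  | all x φ => insert x φ.boundVars
  | ex x φ => insert x φ.boundVars

theorem freeFor_of_notMem_boundVars {y : ℕ} {φ : FOF} (h : y ∉ φ.boundVars) (x : ℕ) :
    φ.freeFor y x := by
  induction φ with
  | all z φ ih | ex z φ ih =>
    simp only [boundVars, Finset.mem_insert, not_or] at h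
    exact Or.inr ⟨h.1, ih h.2⟩
  | _ => simp_all [boundVars, freeFor]

end FOF

theorem clQD_all_of_all_negNeg (x : ℕ) (φ : FOF) :
    ClQD {FOF.all x φ.neg.neg} (FOF.all x φ) := by
  intro E hE
  obtain ⟨y, hy⟩ := Infinite.exists_notMem_finset (φ.free ∪ φ.boundVars)
  rw [Finset.mem_union, not_or] at hy
  have hyx : φ.freeFor y x := FOF.freeFor_of_notMem_boundVars hy.2 x
  have hy_all : y ∉ (FOF.all x φ).free := fun h => hy.1 (Finset.mem_of_mem_erase h)
  have hy_ctx : ∀ γ ∈ ({FOF.all x φ.neg.neg} : Finset FOF), y ∉ γ.free :=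
    fun γ hγ => by rw [Finset.mem_singleton.mp hγ]; exact hy_all
  refine hE.rall _ x y φ hyx hy_ctx hy_all ?_
  exact hE.of_negNeg (hE.lall x y φ.neg.neg hyx)

/-- Gödel's theorem: for `⊢_*^Q` intuitionistic predicate logic
plus additional axioms contained in classical predicate logic, one has
`Γ ⊢_c^Q φ ↔ Γ ⊢_*^Q ¬¬φ` (for all `Γ`, `φ`) if and only if `⊢_*^Q` satisfies
the double negation shift `∀x¬¬φ ⊢ ¬¬∀xφ`. -/
theorem goedel_double_negation (Ax : Set (Finset FOF × FOF))
    (hAx : ∀ p ∈ Ax, ClQD p.1 p.2) :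
    (∀ (Γ : Finset FOF) (φ : FOF), ClQD Γ φ ↔ IntQExtD Ax Γ φ.neg.neg) ↔
      (∀ (x : ℕ) (φ : FOF),
        IntQExtD Ax {FOF.all x φ.neg.neg} (FOF.all x φ).neg.neg) := by
  refine ⟨fun h x φ => (h _ _).mp (clQD_all_of_all_negNeg x φ), fun hdns Γ φ => ⟨?_, ?_⟩⟩
  · exact fun hc => hc _ ((intQGen_intQExtD Ax).clQGen_negNeg hdns)
  · exact fun hi E hE => hE.of_negNeg (hi E hE.toIntQGen fun p hp => hAx p hp E hE)
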